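/- Let R be an integral domain containing elements h, t with t ≠ 0, and suppose f(h) ∈ R is a polynomial expression in h over R₀ = R-constants such that f is invariant under the substitution h ↦ h - t (i.e. f(h) = f(h-t) as polynomials) together with the constraint char R = p. If f is divisible by h^i as a polynomial in h, then f is divisible by the product ∏_{j=0}^{p-1} (h - jt)^i. -/

import Mathlib

open MvPolynomial

namespace Stmt14Aux

variable (p : ℕ) [Fact p.Prime]

/-- The substitution `h ↦ h - a t` as an algebra endomorphism. -/
noncomputable def φ (a : ZMod p) :
    MvPolynomial (Fin 2) (ZMod p) →ₐ[ZMod p] MvPolynomial (Fin 2) (ZMod p) :=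
  aeval (fun j : Fin 2 => if j = 0 then (X 0 - C a * X 1) else X 1)

lemma φ_X0 (a : ZMod p) : φ p a (X 0) = X 0 - C a * X 1 := by
  simp [φ]

lemma φ_comp (a b : ZMod p) : (φ p a).comp (φ p b) = φ p (a + b) := by
  apply MvPolynomial.algHom_ext
  intro j
  fin_cases j <;> simp [φ, sub_sub, map_add, add_mul]

lemma φ_zero : φ p 0 = AlgHom.id _ _ := by
  apply MvPolynomial.algHom_ext
  intro j
  fin_cases j <;> simp [φ]

/-- The substitution as an algebra equivalence. -/
noncomputable def ψ (a : ZMod p) :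
    MvPolynomial (Fin 2) (ZMod p) ≃ₐ[ZMod p] MvPolynomial (Fin 2) (ZMod p) :=
  AlgEquiv.ofAlgHom (φ p a) (φ p (-a))
    (by rw [φ_comp, add_neg_cancel, φ_zero])
    (by rw [φ_comp, neg_add_cancel, φ_zero])

lemma prime_X0 : Prime (X 0 : MvPolynomial (Fin 2) (ZMod p)) := by
  rw [← MulEquiv.prime_iff (p := X 0) (MvPolynomial.finSuccEquiv (ZMod p) 1).toMulEquiv]
  have : (MvPolynomial.finSuccEquiv (ZMod p) 1).toMulEquiv (X 0) = Polynomial.X := by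
    simpa using MvPolynomial.finSuccEquiv_X_zero (R := ZMod p) (n := 1)
  rw [this]
  exact Polynomial.prime_X

lemma prime_lin (a : ZMod p) :
    Prime (X 0 - C a * X 1 : MvPolynomial (Fin 2) (ZMod p)) := by
  have h := (MulEquiv.prime_iff (p := (X 0 : MvPolynomial (Fin 2) (ZMod p))) (ψ p a).toMulEquiv).mpr
    (prime_X0 p)
  have he : (ψ p a).toMulEquiv (X 0) = X 0 - C a * X 1 := φ_X0 p a
  rwa [he] at h

lemma not_dvd_lin {a b : ZMod p} (hab : a ≠ b) :
    ¬ (X 0 - C a * X 1 : MvPolynomial (Fin 2) (ZMod p)) ∣ (X 0 - C b * X 1) := by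
  intro h
  have h2 := map_dvd (eval (fun j : Fin 2 => if j = 0 then a else 1)) h
  simp only [map_sub, map_mul, eval_X, eval_C, if_pos, if_neg] at h2
  have : (0 : ZMod p) ∣ a - b := by simpa using h2
  exact hab (by have := eq_zero_of_zero_dvd this; linear_combination this)

lemma base_identity :
    ∏ a : ZMod p, (Polynomial.X - Polynomial.C a) =
      (Polynomial.X ^ p - Polynomial.X : Polynomial (ZMod p)) := by
  have h1 : 1 < p := (Fact.out : p.Prime).one_lt
  have hd : (Polynomial.X ^ p - Polynomial.X : Polynomial (ZMod p)).natDegree = p :=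
    FiniteField.X_pow_card_sub_X_natDegree_eq (ZMod p) h1
  have hroots : (Polynomial.X ^ p - Polynomial.X : Polynomial (ZMod p)).roots =
      Finset.univ.val := by
    have := FiniteField.roots_X_pow_card_sub_X (ZMod p)
    rwa [ZMod.card] at this
  have hcard : Multiset.card (Polynomial.X ^ p - Polynomial.X :
      Polynomial (ZMod p)).roots = (Polynomial.X ^ p - Polynomial.X :
      Polynomial (ZMod p)).natDegree := by
    rw [hroots, hd]
    simp [ZMod.card p]
  have hmonic : (Polynomial.X ^ p - Polynomial.X : Polynomial (ZMod p)).Monic := by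
    apply Polynomial.monic_X_pow_sub
    rw [Polynomial.degree_X]
    exact_mod_cast Nat.lt_of_lt_of_le h1 (by exact_mod_cast le_refl p)
  have key := Polynomial.C_leadingCoeff_mul_prod_multiset_X_sub_C hcard
  rw [hmonic.leadingCoeff, map_one, one_mul, hroots] at key
  rw [← key, Finset.prod_eq_multiset_prod]

lemma field_identity {K : Type*} [Field K] [Algebra (ZMod p) K] (x t : K) (ht : t ≠ 0) :
    ∏ a : ZMod p, (x - algebraMap (ZMod p) K a * t) = x ^ p - t ^ (p - 1) * x := by
  obtain ⟨n, hn⟩ : ∃ n, p = n + 1 :=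
    ⟨p - 1, (Nat.succ_pred_eq_of_pos (Fact.out : p.Prime).pos).symm⟩
  have key := congrArg (Polynomial.aeval (x * t⁻¹)) (base_identity p)
  simp only [map_prod, map_sub, map_pow, Polynomial.aeval_X, Polynomial.aeval_C] at key
  have expand : ∀ a : ZMod p, x - algebraMap (ZMod p) K a * t =
      t * (x * t⁻¹ - algebraMap (ZMod p) K a) := by
    intro a
    field_simp
  calc ∏ a : ZMod p, (x - algebraMap (ZMod p) K a * t)
      = ∏ a : ZMod p, (t * (x * t⁻¹ - algebraMap (ZMod p) K a)) := by
        exact Finset.prod_congr rfl (fun a _ => expand a)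
    _ = t ^ p * ∏ a : ZMod p, (x * t⁻¹ - algebraMap (ZMod p) K a) := by
        rw [Finset.prod_mul_distrib, Finset.prod_const, Finset.card_univ, ZMod.card]
    _ = t ^ p * ((x * t⁻¹) ^ p - x * t⁻¹) := by rw [key]
    _ = x ^ p - t ^ (p - 1) * x := by
        subst hn
        simp only [Nat.add_sub_cancel]
        rw [mul_pow, inv_pow]
        field_simp
        ring

lemma prod_lin_eq :
    ∏ a : ZMod p, (X 0 - C a * X 1 : MvPolynomial (Fin 2) (ZMod p)) =
      X 0 ^ p - X 1 ^ (p - 1) * X 0 := by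
  set A := MvPolynomial (Fin 2) (ZMod p)
  have hinj := IsFractionRing.injective A (FractionRing A)
  apply hinj
  set ι := algebraMap A (FractionRing A) with hι
  have ht : ι (X 1) ≠ 0 := by
    intro h
    exact MvPolynomial.X_ne_zero 1 (hinj (by rw [h, map_zero]))
  have hC : ∀ a : ZMod p, ι (C a) = algebraMap (ZMod p) (FractionRing A) a := by
    intro a
    rw [← MvPolynomial.algebraMap_eq, ← IsScalarTower.algebraMap_apply]
  rw [map_prod, map_sub, map_pow, map_mul, map_pow]
  calc ∏ a : ZMod p, ι (X 0 - C a * X 1)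
      = ∏ a : ZMod p, (ι (X 0) - algebraMap (ZMod p) (FractionRing A) a * ι (X 1)) := by
        refine Finset.prod_congr rfl (fun a _ => ?_)
        rw [map_sub, map_mul, hC]
    _ = ι (X 0) ^ p - ι (X 1) ^ (p - 1) * ι (X 0) :=
        field_identity p _ _ ht

end Stmt14Aux

open Stmt14Aux

/-- Over `F_p`, if `f ∈ F_p[h, t]` is invariant under the substitution `h ↦ h - t` and is
divisible by `h^i`, then `f` is divisible by `(h^p - t^(p-1) h)^i = ∏_{j=0}^{p-1}(h - jt)^i`. -/
theorem stmt14 (p : ℕ) [Fact p.Prime] (i : ℕ)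
    (f : MvPolynomial (Fin 2) (ZMod p))
    (hinv : aeval (R := ZMod p)
      (fun j : Fin 2 => if j = 0 then (X 0 - X 1 : MvPolynomial (Fin 2) (ZMod p)) else X 1) f
      = f)
    (hdiv : (X 0 : MvPolynomial (Fin 2) (ZMod p)) ^ i ∣ f) :
    ((X 0 : MvPolynomial (Fin 2) (ZMod p)) ^ p - (X 1) ^ (p - 1) * X 0) ^ i ∣ f := by
  -- invariance under φ 1
  have h1 : φ p 1 f = f := by
    have : φ p 1 = aeval (R := ZMod p)
        (fun j : Fin 2 => if j = 0 then (X 0 - X 1 : MvPolynomial (Fin 2) (ZMod p)) else X 1) := by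
      unfold φ
      simp only [map_one, one_mul]
    rw [this]
    exact hinv
  -- invariance under φ n for all naturals
  have hnat : ∀ n : ℕ, φ p (n : ZMod p) f = f := by
    intro n
    induction n with
    | zero => rw [Nat.cast_zero, φ_zero]; rfl
    | succ n ih =>
      have : φ p ((n : ZMod p) + 1) f = φ p (n : ZMod p) (φ p 1 f) := by
        rw [← φ_comp]; rfl
      rw [Nat.cast_succ, this, h1, ih]
  have hfix : ∀ a : ZMod p, φ p a f = f := by
    intro a
    have : ((a.val : ℕ) : ZMod p) = a := ZMod.natCast_rightInverse a
    rw [← this]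
    exact hnat a.val
  -- each (X0 - a X1)^i divides f
  have hdvd : ∀ a : ZMod p, (X 0 - C a * X 1 : MvPolynomial (Fin 2) (ZMod p)) ^ i ∣ f := by
    intro a
    have h := map_dvd (φ p a).toRingHom hdiv
    rw [show ((φ p a).toRingHom f) = f from hfix a] at h
    rw [map_pow] at h
    rwa [show ((φ p a).toRingHom (X 0)) = X 0 - C a * X 1 from φ_X0 p a] at h
  -- pairwise relatively prime
  have hrel : Pairwise (Function.onFun IsRelPrime
      (fun a : ZMod p => (X 0 - C a * X 1 : MvPolynomial (Fin 2) (ZMod p)) ^ i)) := by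
    intro a b hab
    exact (((prime_lin p a).irreducible.isRelPrime_iff_not_dvd).mpr
      (not_dvd_lin p hab)).pow
  have hprod := Fintype.prod_dvd_of_isRelPrime hrel hdvd
  rw [Finset.prod_pow, prod_lin_eq p] at hprod
  exact hprod
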